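/- Let c' be the 2-edge-colouring of K_3 on vertex set {1,2,3} with colour 1 on the pairs {1,2} and {2,3} and colour 2 on the pair {1,3}. Then for every n ≥ 1, every 3-edge-colouring of K_n with colours {1,2,3} that contains no copy of c' (no three vertices two of whose pairs are coloured 1 and the third coloured 2) has a set of at least n^{1/2} vertices on which at most two of the three colours appear; in particular h_3(n, c') ≥ n^{1/2}. -/

import Mathlib

/-- A set `X` is homogeneous for an edge-colouring `c` of `K_n` with colours in `Fin s`
if some colour does not appear on pairs of distinct elements of `X`. -/
def IsHomog {n s : ℕ} (c : Sym2 (Fin n) → Fin s) (X : Finset (Fin n)) : Prop :=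
  ∃ i : Fin s, ∀ x ∈ X, ∀ y ∈ X, x ≠ y → c s(x, y) ≠ i

/-- `c` contains a copy of the pattern `c'` (colours compared via their indices). -/
def HasCopy {n s k s' : ℕ} (c : Sym2 (Fin n) → Fin s) (c' : Sym2 (Fin k) → Fin s') : Prop :=
  ∃ φ : Fin k ↪ Fin n, ∀ x y : Fin k, x ≠ y →
    ((c s(φ x, φ y) : ℕ) = (c' s(x, y) : ℕ))

/-- The 2-edge-colouring of `K_3` with colour `0` on the pairs `{0,1}` and
`{1,2}` and colour `1` on the pair `{0,2}`. -/
def cCherry : Sym2 (Fin 3) → Fin 2 := fun e =>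
  if e = s((0 : Fin 3), (2 : Fin 3)) then 1 else 0

/-!
Let `G` be the graph of colour-`0` edges and `Δ` its maximum degree. Forbidding the cherry means
that two colour-`0` neighbours of a vertex are never joined by colour `1`, so a vertex of
degree `Δ` together with its neighbourhood is a set of size `Δ + 1` missing colour `1`.
Greedily, `G` has an independent set of size at least `n / (Δ + 1)`, which misses colour `0`.
The larger of the two has size at least `√n`.
-/

open Finset

namespace SimpleGraph

variable {V : Type*} [Fintype V] [DecidableEq V] (G : SimpleGraph V) [DecidableRel G.Adj]

theorem exists_isIndepSet_subset_card_le_mul (T : Finset V) :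
    ∃ S ⊆ T, G.IsIndepSet (S : Set V) ∧ #T ≤ (G.maxDegree + 1) * #S := by
  induction T using Finset.strongInduction with
  | H T ih =>
  obtain rfl | ⟨x, hx⟩ := T.eq_empty_or_nonempty
  · exact ⟨∅, subset_rfl, by simp⟩
  set B := insert x (G.neighborFinset x)
  obtain ⟨S, hST, hS, hcard⟩ :=
    ih (T \ B) ((ssubset_iff_of_subset sdiff_subset).2 ⟨x, hx, by simp [B]⟩)
  have hxS : x ∉ S := fun h => (mem_sdiff.1 (hST h)).2 (mem_insert_self _ _)
  refine ⟨insert x S, insert_subset hx (hST.trans sdiff_subset), ?_, ?_⟩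
  · have hxy : ∀ y ∈ S, ¬G.Adj x y := fun y hy hxy =>
      (mem_sdiff.1 (hST hy)).2 (mem_insert_of_mem ((G.mem_neighborFinset x y).2 hxy))
    rw [coe_insert, IsIndepSet, Set.pairwise_insert]
    exact ⟨hS, fun y hy _ => ⟨hxy y hy, fun h => hxy y hy h.symm⟩⟩
  · have hB : #B ≤ G.maxDegree + 1 :=
      (card_insert_le _ _).trans (Nat.add_le_add_right (G.degree_le_maxDegree x) 1)
    rw [card_insert_of_notMem hxS, mul_add_one]
    exact card_le_card_sdiff_add_card.trans (Nat.add_le_add hcard hB)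

end SimpleGraph

theorem Real.sqrt_le_max_of_le_mul {n a b : ℝ} (ha : 0 ≤ a) (hb : 0 ≤ b) (h : n ≤ a * b) :
    √n ≤ max a b := by
  by_contra! hlt
  have hn : 0 ≤ n := (Real.sqrt_pos.1 (ha.trans_lt ((le_max_left a b).trans_lt hlt))).le
  have := calc
    n ≤ a * b := h
    _ < √n * √n := mul_lt_mul'' (max_lt_iff.1 hlt).1 (max_lt_iff.1 hlt).2 ha hb
    _ = n := Real.mul_self_sqrt hn
  exact lt_irrefl n this

def colourGraph {V α : Type*} (c : Sym2 V → α) (i : α) : SimpleGraph V :=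
  SimpleGraph.fromEdgeSet {e | c e = i}

instance {V α : Type*} [DecidableEq V] [DecidableEq α] (c : Sym2 V → α) (i : α) :
    DecidableRel (colourGraph c i).Adj :=
  fun x y => inferInstanceAs (Decidable (c s(x, y) = i ∧ x ≠ y))

theorem isHomog_of_isIndepSet {n s : ℕ} {c : Sym2 (Fin n) → Fin s} {i : Fin s}
    {X : Finset (Fin n)} (hX : (colourGraph c i).IsIndepSet (X : Set (Fin n))) : IsHomog c X :=
  ⟨i, fun _ hx _ hy hxy hc => hX hx hy hxy ⟨hc, hxy⟩⟩

section Colouring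

variable {n : ℕ} {c : Sym2 (Fin n) → Fin 3}

theorem hasCopy_cCherry {a b v : Fin n} (hab : a ≠ b) (hbv : b ≠ v) (hav : a ≠ v)
    (hab0 : c s(a, b) = 0) (hbv0 : c s(b, v) = 0) (hav1 : c s(a, v) = 1) :
    HasCopy c cCherry := by
  have hba0 : c s(b, a) = 0 := Sym2.eq_swap ▸ hab0
  have hvb0 : c s(v, b) = 0 := Sym2.eq_swap ▸ hbv0
  have hva1 : c s(v, a) = 1 := Sym2.eq_swap ▸ hav1
  refine ⟨⟨![a, b, v], fun x y hxy => ?_⟩, fun x y hxy => ?_⟩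
  · fin_cases x <;> fin_cases y <;> simp_all
  · change ((c s(![a, b, v] x, ![a, b, v] y) : ℕ) = _)
    fin_cases x <;> fin_cases y <;> simp_all [cCherry]

theorem isHomog_insert_neighborFinset (hc : ¬HasCopy c cCherry) (x : Fin n) :
    IsHomog c (insert x ((colourGraph c 0).neighborFinset x)) := by
  have hN : ∀ y ∈ (colourGraph c 0).neighborFinset x, c s(x, y) = 0 ∧ x ≠ y :=
    fun y hy => (SimpleGraph.mem_neighborFinset _ x y).1 hy
  refine ⟨1, fun y hy z hz hyz hyz1 => ?_⟩
  rcases mem_insert.1 hy with rfl | hy <;> rcases mem_insert.1 hz with rfl | hz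
  · exact hyz rfl
  · rw [(hN z hz).1] at hyz1
    exact absurd hyz1 (by decide)
  · rw [Sym2.eq_swap, (hN y hy).1] at hyz1
    exact absurd hyz1 (by decide)
  · exact hc (hasCopy_cCherry (hN y hy).2.symm (hN z hz).2 hyz
      (Sym2.eq_swap ▸ (hN y hy).1) (hN z hz).1 hyz1)

end Colouring

theorem stmt16 :
    ∀ n : ℕ, 1 ≤ n → ∀ c : Sym2 (Fin n) → Fin 3, ¬ HasCopy c cCherry →
      ∃ X : Finset (Fin n), IsHomog c X ∧ (n : ℝ) ^ ((1 : ℝ) / 2) ≤ (X.card : ℝ) := by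
  intro n hn c hc
  set G := colourGraph c 0
  have : Nonempty (Fin n) := ⟨⟨0, hn⟩⟩
  obtain ⟨x, hx⟩ := G.exists_maximal_degree_vertex
  obtain ⟨S, -, hS, hcard⟩ := G.exists_isIndepSet_subset_card_le_mul univ
  have hcard_star : #(insert x (G.neighborFinset x)) = G.maxDegree + 1 := by
    rw [card_insert_of_notMem (G.notMem_neighborFinset_self x), G.card_neighborFinset_eq_degree, hx]
  rw [card_univ, Fintype.card_fin] at hcard
  have hsqrt : √(n : ℝ) ≤ max ((G.maxDegree + 1 : ℕ) : ℝ) (#S : ℝ) :=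
    Real.sqrt_le_max_of_le_mul (Nat.cast_nonneg _) (Nat.cast_nonneg _) (by exact_mod_cast hcard)
  rw [← Real.sqrt_eq_rpow]
  rcases le_max_iff.1 hsqrt with h | h
  · exact ⟨_, isHomog_insert_neighborFinset hc x, hcard_star ▸ h⟩
  · exact ⟨S, isHomog_of_isIndepSet hS, h⟩
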